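/- arXiv:2212.10237 — 3 statements merged into one kernel-verified Lean document; each statement's English description precedes it below -/
import Mathlib

section
/- Let X be a type, f : X → X a map, and a : ℕ → X → ℝ a subadditive cocycle over f, i.e. a (n+s) x ≤ a n (f^[s] x) + a s x for all integers n ≥ 1, s ≥ 1 and all x ∈ X. Let m ≥ 1 be an integer and D ≥ 0 a real number such that 0 ≤ a s x ≤ D for all integers s with 1 ≤ s ≤ m and all x ∈ X. Let F : X → ℝ satisfy F x ≥ a m x and F x ≥ 0 for all x ∈ X. Then for every integer n ≥ 1 and every x ∈ X one has m · (a n x) ≤ (∑_{l=0}^{n-1} F (f^[l] x)) + 3 · m · D. -/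
/-! For each offset `r < m`, cut `[0, n)` into a head `[0, r)`, full blocks `[r + i m, r + (i + 1) m)`
and a tail of length between `1` and `m`. Subadditivity bounds `a n x` by the head and tail terms,
each at most `D`, plus the block terms `a m ≤ F`. Blocks belonging to different offsets start in
different residue classes mod `m`, so they are disjoint; since `F ≥ 0`, summing the `m` bounds
gives `m · a n x ≤ ∑_{l<n} F (f^l x) + 2 m D`. -/

open Finset

def IsSubadditiveCocycle {X : Type*} (f : X → X) (a : ℕ → X → ℝ) : Prop :=
  ∀ n s : ℕ, 1 ≤ n → 1 ≤ s → ∀ x, a (n + s) x ≤ a n (f^[s] x) + a s x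

theorem Finset.sum_sum_range_add_mul_le {M : Type*} [AddCommMonoid M] [PartialOrder M]
    [IsOrderedAddMonoid M] {G : ℕ → M} (hG : ∀ l, 0 ≤ G l) {m N : ℕ} {q : ℕ → ℕ}
    (hq : ∀ r < m, ∀ i < q r, r + i * m < N) :
    ∑ r ∈ range m, ∑ i ∈ range (q r), G (r + i * m) ≤ ∑ l ∈ range N, G l := by
  set P := (range m).sigma fun r => range (q r)
  have hinj : Set.InjOn (fun p : Σ _ : ℕ, ℕ => p.1 + p.2 * m) P := by
    rintro ⟨r, i⟩ hri ⟨r', i'⟩ hri' h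
    simp only [P, coe_sigma, Set.mem_sigma_iff, coe_range, Set.mem_Iio] at hri hri' h
    have hpos : 0 < m := by omega
    have hr : r = r' := by
      simpa [Nat.add_mul_mod_self_right, Nat.mod_eq_of_lt hri.1, Nat.mod_eq_of_lt hri'.1]
        using congrArg (· % m) h
    subst hr
    have : i * m = i' * m := by omega
    simp [Nat.eq_of_mul_eq_mul_right hpos this]
  calc ∑ r ∈ range m, ∑ i ∈ range (q r), G (r + i * m)
      = ∑ l ∈ P.image fun p => p.1 + p.2 * m, G l := by
        rw [sum_image hinj, sum_sigma]
    _ ≤ ∑ l ∈ range N, G l := by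
        refine sum_le_sum_of_subset_of_nonneg ?_ fun l _ _ => hG l
        intro l hl
        simp only [P, mem_image, mem_sigma, mem_range] at hl
        obtain ⟨⟨r, i⟩, ⟨hr, hi⟩, rfl⟩ := hl
        exact mem_range.2 (hq r hr i hi)

namespace IsSubadditiveCocycle

variable {X : Type*} {f : X → X} {a : ℕ → X → ℝ}

theorem le_sum_blocks (hsub : IsSubadditiveCocycle f a) {m t : ℕ} (hm : 1 ≤ m) (ht : 1 ≤ t)
    (q : ℕ) (x : X) :
    a (q * m + t) x ≤ ∑ i ∈ range q, a m (f^[i * m] x) + a t (f^[q * m] x) := by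
  induction q generalizing x with
  | zero => simp
  | succ q ih =>
    have hsplit : (q + 1) * m + t = (q * m + t) + m := by ring
    have hshift : ∀ k, f^[k] (f^[m] x) = f^[k + m] x := fun k =>
      (Function.iterate_add_apply f k m x).symm
    calc a ((q + 1) * m + t) x ≤ a (q * m + t) (f^[m] x) + a m x := by
          rw [hsplit]; exact hsub _ _ (by omega) hm x
      _ ≤ (∑ i ∈ range q, a m (f^[i * m] (f^[m] x)) + a t (f^[q * m] (f^[m] x))) + a m x := by
          gcongr; exact ih _
      _ = ∑ i ∈ range (q + 1), a m (f^[i * m] x) + a t (f^[(q + 1) * m] x) := by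
          simp only [hshift, sum_range_succ', add_one_mul, zero_mul, Function.iterate_zero_apply]
          ring

variable {m : ℕ} {D : ℝ} {F : X → ℝ}

theorem le_sum_shifted_blocks (hsub : IsSubadditiveCocycle f a) (hm : 1 ≤ m)
    (hbound : ∀ s : ℕ, 1 ≤ s → s ≤ m → ∀ x, 0 ≤ a s x ∧ a s x ≤ D) (hF : ∀ x, a m x ≤ F x)
    {r q t : ℕ} (hr : r < m) (ht : 1 ≤ t) (htm : t ≤ m) (x : X) :
    a (r + q * m + t) x ≤ ∑ i ∈ range q, F (f^[r + i * m] x) + 2 * D := by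
  have hblocks : ∀ y, a (q * m + t) y ≤ ∑ i ∈ range q, F (f^[i * m] y) + D := fun y =>
    (hsub.le_sum_blocks hm ht q y).trans <| add_le_add (sum_le_sum fun i _ => hF _)
      (hbound t ht htm _).2
  rcases Nat.eq_zero_or_pos r with rfl | hr0
  · have hD : 0 ≤ D := (hbound t ht htm x).1.trans (hbound t ht htm x).2
    simpa using (hblocks x).trans (by linarith)
  · have hshift : ∀ i, f^[i * m] (f^[r] x) = f^[r + i * m] x := fun i => by
      rw [← Function.iterate_add_apply, add_comm]
    calc a (r + q * m + t) x ≤ a (q * m + t) (f^[r] x) + a r x := by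
          rw [add_assoc, add_comm r]; exact hsub _ _ (by omega) hr0 x
      _ ≤ (∑ i ∈ range q, F (f^[i * m] (f^[r] x)) + D) + D :=
          add_le_add (hblocks _) (hbound r hr0 hr.le x).2
      _ = ∑ i ∈ range q, F (f^[r + i * m] x) + 2 * D := by simp only [hshift]; ring

theorem exists_le_sum_shifted_blocks (hsub : IsSubadditiveCocycle f a) (hm : 1 ≤ m)
    (hbound : ∀ s : ℕ, 1 ≤ s → s ≤ m → ∀ x, 0 ≤ a s x ∧ a s x ≤ D) (hF : ∀ x, a m x ≤ F x)
    {n r : ℕ} (hn : 1 ≤ n) (hr : r < m) (x : X) :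
    ∃ q, (∀ i < q, r + i * m < n) ∧ a n x ≤ ∑ i ∈ range q, F (f^[r + i * m] x) + 2 * D := by
  rcases lt_or_ge r n with hrn | hnr
  · have hdiv := Nat.div_add_mod' (n - r - 1) m
    have hmod := Nat.mod_lt (n - r - 1) hm
    set q := (n - r - 1) / m
    refine ⟨q, fun i hi => ?_, ?_⟩
    · have : i * m + m ≤ q * m := by nlinarith
      omega
    · have hdecomp : r + q * m + ((n - r - 1) % m + 1) = n := by omega
      rw [← hdecomp]
      exact hsub.le_sum_shifted_blocks hm hbound hF hr (by omega) (by omega) x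
  · refine ⟨0, by simp, ?_⟩
    have han := hbound n hn (by omega) x
    simp only [range_zero, sum_empty, zero_add]
    linarith [han.1, han.2]

end IsSubadditiveCocycle

theorem subadditive_cocycle_birkhoff_bound_general
    {X : Type*} (f : X → X) (a : ℕ → X → ℝ)
    (hsub : ∀ n s : ℕ, 1 ≤ n → 1 ≤ s → ∀ x, a (n + s) x ≤ a n (f^[s] x) + a s x)
    (m : ℕ) (hm : 1 ≤ m) (D : ℝ)
    (hbound : ∀ s : ℕ, 1 ≤ s → s ≤ m → ∀ x, 0 ≤ a s x ∧ a s x ≤ D)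
    (F : X → ℝ) (hF : ∀ x, a m x ≤ F x) (hF0 : ∀ x, 0 ≤ F x) :
    ∀ n : ℕ, 1 ≤ n → ∀ x,
      (m : ℝ) * a n x ≤ (∑ l ∈ Finset.range n, F (f^[l] x)) + 3 * m * D := by
  intro n hn x
  have hD : 0 ≤ D := (hbound 1 le_rfl hm x).1.trans (hbound 1 le_rfl hm x).2
  choose! q hq_lt hq_le using fun r (hr : r < m) =>
    IsSubadditiveCocycle.exists_le_sum_shifted_blocks hsub hm hbound hF hn hr x
  calc (m : ℝ) * a n x = ∑ r ∈ range m, a n x := by simp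
    _ ≤ ∑ r ∈ range m, (∑ i ∈ range (q r), F (f^[r + i * m] x) + 2 * D) :=
        sum_le_sum fun r hr => hq_le r (mem_range.1 hr)
    _ = ∑ r ∈ range m, ∑ i ∈ range (q r), F (f^[r + i * m] x) + 2 * m * D := by
        simp only [sum_add_distrib, sum_const, card_range, nsmul_eq_mul]; ring
    _ ≤ ∑ l ∈ range n, F (f^[l] x) + 2 * m * D := by
        gcongr
        exact sum_sum_range_add_mul_le (G := fun l => F (f^[l] x)) (fun l => hF0 _) hq_lt
    _ ≤ ∑ l ∈ range n, F (f^[l] x) + 3 * m * D := by gcongr; norm_num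

/-- If `a` is a subadditive cocycle over `f`, `m ≥ 1`, `0 ≤ a s x ≤ D`
for `1 ≤ s ≤ m`, and `F` is a nonnegative function with `F x ≥ a m x`, then for every
`n ≥ 1` and every `x`:
`m * (a n x) ≤ (∑_{l=0}^{n-1} F (f^[l] x)) + 3 * m * D`. -/
theorem subadditive_cocycle_birkhoff_bound
    {X : Type*} (f : X → X) (a : ℕ → X → ℝ)
    (hsub : ∀ n s : ℕ, 1 ≤ n → 1 ≤ s → ∀ x, a (n + s) x ≤ a n (f^[s] x) + a s x)
    (m : ℕ) (hm : 1 ≤ m) (D : ℝ) (hD : 0 ≤ D)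
    (hbound : ∀ s : ℕ, 1 ≤ s → s ≤ m → ∀ x, 0 ≤ a s x ∧ a s x ≤ D)
    (F : X → ℝ) (hF : ∀ x, a m x ≤ F x) (hF0 : ∀ x, 0 ≤ F x) :
    ∀ n : ℕ, 1 ≤ n → ∀ x,
      (m : ℝ) * a n x ≤ (∑ l ∈ Finset.range n, F (f^[l] x)) + 3 * m * D :=
  subadditive_cocycle_birkhoff_bound_general f a hsub m hm D hbound F hF hF0
end

section
/- Let d ≥ 1, let η, ν : ℝ → ℝ^d be three times continuously differentiable on a neighbourhood of 0 with η′(0) ≠ 0, and let t ∈ ℝ. Set g s = η s + t • ν s. Then there exist constants C > 0 and s₀ > 0 such that for all s with |s| ≤ s₀: | ‖g s − g 0‖ − (‖g′(0)‖ / ‖η′(0)‖) · ‖η s − η 0‖ | ≤ C · s². -/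
/-!
Both `‖g s - g 0‖` and `‖η s - η 0‖` equal `|s|` times the norm of the derivative at `0`, up to
`O(s²)`: the remainder `f s - f 0 - s • f′(0)` has derivative `f′(s) - f′(0) = O(s)`, so the mean
value theorem makes it `O(s²)`, and the reverse triangle inequality passes this to the norms.
Since `η′(0) ≠ 0`, the ratio `‖g′(0)‖ / ‖η′(0)‖` turns the first-order term of `‖η s - η 0‖`
into that of `‖g s - g 0‖`.
-/

open Asymptotics Filter Topology

section

variable {E : Type*} [NormedAddCommGroup E] [NormedSpace ℝ E]

theorem isBigO_sub_pow_succ_of_hasDerivAt {f f' : ℝ → E} {x₀ : ℝ} {n : ℕ}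
    (hff' : ∀ᶠ x in 𝓝 x₀, HasDerivAt f (f' x) x) (hf' : f' =O[𝓝 x₀] fun x ↦ (x - x₀) ^ n) :
    (fun x ↦ f x - f x₀) =O[𝓝 x₀] fun x ↦ (x - x₀) ^ (n + 1) := by
  obtain ⟨c, hc_pos, hc⟩ := hf'.exists_pos
  obtain ⟨ε, hε, hball⟩ := Metric.eventually_nhds_iff_ball.mp (hff'.and hc.bound)
  refine IsBigO.of_bound c ?_
  filter_upwards [Metric.ball_mem_nhds x₀ hε] with x hx
  have hseg : segment ℝ x₀ x ⊆ Metric.ball x₀ ε :=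
    (convex_ball x₀ ε).segment_subset (Metric.mem_ball_self hε) hx
  have hbound : ∀ y ∈ segment ℝ x₀ x, ‖f' y‖ ≤ c * |x - x₀| ^ n := fun y hy ↦ by
    calc ‖f' y‖ ≤ c * ‖(y - x₀) ^ n‖ := (hball y (hseg hy)).2
      _ ≤ c * |x - x₀| ^ n := by
        rw [norm_pow, Real.norm_eq_abs]
        gcongr c * ?_ ^ n
        simpa [Real.norm_eq_abs] using norm_sub_le_of_mem_segment hy
  have := (convex_segment x₀ x).norm_image_sub_le_of_norm_hasDerivWithin_le
    (fun y hy ↦ (hball y (hseg hy)).1.hasDerivWithinAt) hbound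
    (left_mem_segment ℝ x₀ x) (right_mem_segment ℝ x₀ x)
  rw [norm_pow, Real.norm_eq_abs, pow_succ, ← mul_assoc]
  simpa [Real.norm_eq_abs] using this

theorem ContDiffAt.isBigO_sub_sub_smul_deriv {f : ℝ → E} {x₀ : ℝ} (hf : ContDiffAt ℝ 2 f x₀) :
    (fun x ↦ f x - f x₀ - (x - x₀) • deriv f x₀) =O[𝓝 x₀] fun x ↦ (x - x₀) ^ 2 := by
  have hderiv : ∀ᶠ x in 𝓝 x₀, HasDerivAt (fun x ↦ f x - (x - x₀) • deriv f x₀)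
      (deriv f x - deriv f x₀) x := by
    filter_upwards [hf.eventually (by simp)] with x hx
    simpa using (hx.differentiableAt (by simp)).hasDerivAt.fun_sub
      (((hasDerivAt_id x).sub_const x₀).smul_const (deriv f x₀))
  have hderiv_sub : (fun x ↦ deriv f x - deriv f x₀) =O[𝓝 x₀] fun x ↦ (x - x₀) ^ 1 := by
    simpa using ((hf.derivWithin (m := 1) (by norm_num)).differentiableAt (by simp)).isBigO_sub
  simpa [sub_right_comm] using isBigO_sub_pow_succ_of_hasDerivAt hderiv hderiv_sub

theorem ContDiffAt.isBigO_norm_sub_sub_abs_mul_norm_deriv {f : ℝ → E} {x₀ : ℝ}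
    (hf : ContDiffAt ℝ 2 f x₀) :
    (fun x ↦ ‖f x - f x₀‖ - |x - x₀| * ‖deriv f x₀‖) =O[𝓝 x₀] fun x ↦ (x - x₀) ^ 2 := by
  refine IsBigO.trans (IsBigO.of_bound 1 (Eventually.of_forall fun x ↦ ?_))
    hf.isBigO_sub_sub_smul_deriv
  rw [one_mul, Real.norm_eq_abs, ← Real.norm_eq_abs (x - x₀), ← norm_smul]
  exact abs_norm_sub_norm_le _ _

end

theorem Asymptotics.IsBigO.exists_pos_forall_dist_le {α F G : Type*} [PseudoMetricSpace α]
    [Norm F] [SeminormedAddCommGroup G] {f : α → F} {g : α → G} {a : α} (h : f =O[𝓝 a] g) :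
    ∃ C > (0 : ℝ), ∃ δ > (0 : ℝ), ∀ x, dist x a ≤ δ → ‖f x‖ ≤ C * ‖g x‖ := by
  obtain ⟨C, hC, hCfg⟩ := h.exists_pos
  obtain ⟨ε, hε, hball⟩ := Metric.eventually_nhds_iff.mp hCfg.bound
  exact ⟨C, hC, ε / 2, half_pos hε, fun x hx ↦ hball (hx.trans_lt (half_lt_self hε))⟩

theorem shifted_front_distance_expansion_general
    (d : ℕ) (η ν : ℝ → EuclideanSpace ℝ (Fin d))
    (U : Set ℝ) (hUopen : IsOpen U) (hU0 : (0 : ℝ) ∈ U)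
    (hη : ContDiffOn ℝ 3 η U) (hν : ContDiffOn ℝ 3 ν U)
    (hη' : deriv η 0 ≠ 0) (t : ℝ)
    (g : ℝ → EuclideanSpace ℝ (Fin d)) (hg : g = fun s => η s + t • ν s) :
    ∃ C > (0 : ℝ), ∃ s₀ > (0 : ℝ), ∀ s : ℝ, |s| ≤ s₀ →
      |‖g s - g 0‖ - (‖deriv g 0‖ / ‖deriv η 0‖) * ‖η s - η 0‖| ≤ C * s ^ 2 := by
  have hη₂ : ContDiffAt ℝ 2 η 0 := (hη.contDiffAt (hUopen.mem_nhds hU0)).of_le (by norm_num)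
  have hν₂ : ContDiffAt ℝ 2 ν 0 := (hν.contDiffAt (hUopen.mem_nhds hU0)).of_le (by norm_num)
  have hg₂ : ContDiffAt ℝ 2 g 0 := hg ▸ hη₂.add (hν₂.const_smul t)
  set R := ‖deriv g 0‖ / ‖deriv η 0‖
  have hR : R * ‖deriv η 0‖ = ‖deriv g 0‖ := div_mul_cancel₀ _ (norm_ne_zero_iff.mpr hη')
  have hexpansion : (fun s ↦ ‖g s - g 0‖ - R * ‖η s - η 0‖) =O[𝓝 0] fun s ↦ s ^ 2 := by
    refine ((hg₂.isBigO_norm_sub_sub_abs_mul_norm_deriv.sub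
      (hη₂.isBigO_norm_sub_sub_abs_mul_norm_deriv.const_mul_left R)).congr_left
        fun s ↦ ?_).congr_right fun s ↦ by simp
    rw [← hR]
    ring
  obtain ⟨C, hC, s₀, hs₀, hbound⟩ := hexpansion.exists_pos_forall_dist_le
  refine ⟨C, hC, s₀, hs₀, fun s hs ↦ ?_⟩
  simpa using hbound s (by rwa [Real.dist_0_eq_abs])

/-- If `η, ν : ℝ → ℝ^d` are `C³` on a neighbourhood of `0` with `η′(0) ≠ 0`,
`t ∈ ℝ` and `g s = η s + t • ν s`, then
`‖g s − g 0‖ = (‖g′(0)‖ / ‖η′(0)‖) ‖η s − η 0‖ + O(s²)` near `0`. -/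
theorem shifted_front_distance_expansion
    (d : ℕ) (hd : 1 ≤ d) (η ν : ℝ → EuclideanSpace ℝ (Fin d))
    (U : Set ℝ) (hUopen : IsOpen U) (hU0 : (0 : ℝ) ∈ U)
    (hη : ContDiffOn ℝ 3 η U) (hν : ContDiffOn ℝ 3 ν U)
    (hη' : deriv η 0 ≠ 0) (t : ℝ)
    (g : ℝ → EuclideanSpace ℝ (Fin d)) (hg : g = fun s => η s + t • ν s) :
    ∃ C > (0 : ℝ), ∃ s₀ > (0 : ℝ), ∀ s : ℝ, |s| ≤ s₀ →
      |‖g s - g 0‖ - (‖deriv g 0‖ / ‖deriv η 0‖) * ‖η s - η 0‖| ≤ C * s ^ 2 :=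
  shifted_front_distance_expansion_general d η ν U hUopen hU0 hη hν hη' t g hg
end

section
/- Let m ∈ ℕ and C > 0, and let ε₀, ε₁, …, ε_{m+1} and δ₀, δ₁, …, δ_m be positive real numbers such that for every j = 0, 1, …, m one has ε_j/δ_j − C·ε_j² ≤ ε_{j+1} ≤ ε_j/δ_j + C·ε_j² and C·δ_j·ε_j < 1. Then ε_{m+1} · ∏_{j=0}^{m} δ_j/(1 + C·δ_j·ε_j) ≤ ε₀ ≤ ε_{m+1} · ∏_{j=0}^{m} δ_j/(1 − C·δ_j·ε_j). -/
/-!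
Multiplying the two-sided recursion by `δ_j > 0` shows that `ε_j` lies between
`ε_{j+1} δ_j / (1 + C δ_j ε_j)` and `ε_{j+1} δ_j / (1 - C δ_j ε_j)`. All these factors are
positive, so the one-step bounds telescope into the product bounds.
-/

open Finset

section Telescoping

variable {R : Type*} [CommSemiring R] [PartialOrder R] [IsOrderedRing R] {x r : ℕ → R} {n : ℕ}

theorem mul_prod_range_le_of_forall_mul_le (hr : ∀ j < n, 0 ≤ r j)
    (hx : ∀ j < n, x (j + 1) * r j ≤ x j) : x n * ∏ j ∈ range n, r j ≤ x 0 := by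
  induction n with
  | zero => simp
  | succ n ih =>
    have hprod : 0 ≤ ∏ j ∈ range n, r j :=
      prod_nonneg fun j hj => hr j (by rw [mem_range] at hj; omega)
    calc x (n + 1) * ∏ j ∈ range (n + 1), r j = x (n + 1) * r n * ∏ j ∈ range n, r j := by
          rw [prod_range_succ]; ring
      _ ≤ x n * ∏ j ∈ range n, r j := mul_le_mul_of_nonneg_right (hx n n.lt_succ_self) hprod
      _ ≤ x 0 := ih (fun j hj => hr j (by omega)) (fun j hj => hx j (by omega))

theorem le_mul_prod_range_of_forall_le_mul (hr : ∀ j < n, 0 ≤ r j)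
    (hx : ∀ j < n, x j ≤ x (j + 1) * r j) : x 0 ≤ x n * ∏ j ∈ range n, r j := by
  induction n with
  | zero => simp
  | succ n ih =>
    have hprod : 0 ≤ ∏ j ∈ range n, r j :=
      prod_nonneg fun j hj => hr j (by rw [mem_range] at hj; omega)
    calc x 0 ≤ x n * ∏ j ∈ range n, r j :=
          ih (fun j hj => hr j (by omega)) (fun j hj => hx j (by omega))
      _ ≤ x (n + 1) * r n * ∏ j ∈ range n, r j :=
          mul_le_mul_of_nonneg_right (hx n n.lt_succ_self) hprod
      _ = x (n + 1) * ∏ j ∈ range (n + 1), r j := by rw [prod_range_succ]; ring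

end Telescoping

section SandwichStep

variable {a b c d : ℝ}

theorem mul_div_one_add_le_of_le_div_add (hd : 0 < d) (hpos : 0 < 1 + c * d * a)
    (h : b ≤ a / d + c * a ^ 2) : b * (d / (1 + c * d * a)) ≤ a := by
  rw [mul_div_assoc', div_le_iff₀ hpos]
  have : b * d ≤ a + c * a ^ 2 * d := by
    calc b * d ≤ (a / d + c * a ^ 2) * d := by gcongr
      _ = a + c * a ^ 2 * d := by field_simp
  linarith

theorem le_mul_div_one_sub_of_div_sub_le (hd : 0 < d) (hpos : 0 < 1 - c * d * a)
    (h : a / d - c * a ^ 2 ≤ b) : a ≤ b * (d / (1 - c * d * a)) := by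
  rw [mul_div_assoc', le_div_iff₀ hpos]
  have : a - c * a ^ 2 * d ≤ b * d := by
    calc a - c * a ^ 2 * d = (a / d - c * a ^ 2) * d := by field_simp
      _ ≤ b * d := by gcongr
  linarith

end SandwichStep

/-- The recursive sandwich estimate for the expansion of convex fronts:
if positive numbers `ε₀, …, ε_{m+1}` and `δ₀, …, δ_m` satisfy
`ε_j/δ_j − C ε_j² ≤ ε_{j+1} ≤ ε_j/δ_j + C ε_j²` and `C δ_j ε_j < 1` for all `j ≤ m`, then
`ε_{m+1} ∏_{j=0}^m δ_j/(1 + C δ_j ε_j) ≤ ε₀ ≤ ε_{m+1} ∏_{j=0}^m δ_j/(1 − C δ_j ε_j)`. -/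
theorem recursive_sandwich_product_estimate
    (m : ℕ) (C : ℝ) (hC : 0 < C) (ε δ : ℕ → ℝ)
    (hε : ∀ j ≤ m + 1, 0 < ε j) (hδ : ∀ j ≤ m, 0 < δ j)
    (hrec : ∀ j ≤ m,
      ε j / δ j - C * (ε j) ^ 2 ≤ ε (j + 1) ∧ ε (j + 1) ≤ ε j / δ j + C * (ε j) ^ 2)
    (hsmall : ∀ j ≤ m, C * δ j * ε j < 1) :
    ε (m + 1) * ∏ j ∈ Finset.range (m + 1), δ j / (1 + C * δ j * ε j) ≤ ε 0 ∧
      ε 0 ≤ ε (m + 1) * ∏ j ∈ Finset.range (m + 1), δ j / (1 - C * δ j * ε j) := by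
  have hplus : ∀ j < m + 1, 0 < 1 + C * δ j * ε j := fun j hj => by
    have := hδ j (by omega); have := hε j (by omega); positivity
  have hminus : ∀ j < m + 1, 0 < 1 - C * δ j * ε j := fun j hj => by
    linarith [hsmall j (by omega)]
  constructor
  · refine mul_prod_range_le_of_forall_mul_le (fun j hj => ?_) (fun j hj => ?_)
    · exact div_nonneg (hδ j (by omega)).le (hplus j hj).le
    · exact mul_div_one_add_le_of_le_div_add (hδ j (by omega)) (hplus j hj) (hrec j (by omega)).2
  · refine le_mul_prod_range_of_forall_le_mul (fun j hj => ?_) (fun j hj => ?_)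
    · exact div_nonneg (hδ j (by omega)).le (hminus j hj).le
    · exact le_mul_div_one_sub_of_div_sub_le (hδ j (by omega)) (hminus j hj) (hrec j (by omega)).1
end
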